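/- Let M > 0, let h and g be holomorphic on 𝔻ⁿ with h(0) = g(0) = 0, ∂h/∂z_j(0) = 1 and ∂g/∂z_j(0) = 0 for all j = 1,…,n, and with Taylor expansions h(z) = Σ_{j=1}^n z_j + Σ_{|α|≥2} a_α z^α and g(z) = Σ_{|α|≥2} b_α z^α converging on 𝔻ⁿ. If Σ_{m=2}^∞ Σ_{α : |α| = m} n·m·(m−1)·(|a_α| + |b_α|) ≤ M, then f = h + conj∘g belongs to 𝓑_{H_n^0}(M). (Theorem 2.6.) -/

import Mathlib

open Complex Finset

noncomputable def pder {n : ℕ} (f : (Fin n → ℂ) → ℂ) (z : Fin n → ℂ) (j : Fin n) : ℂ :=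
  fderiv ℂ f z (Pi.single j 1)

noncomputable def pder2 {n : ℕ} (f : (Fin n → ℂ) → ℂ) (z : Fin n → ℂ) (j k : Fin n) : ℂ :=
  fderiv ℂ (fun w => pder f w k) z (Pi.single j 1)

def polydisk (n : ℕ) : Set (Fin n → ℂ) := {z | ∀ j, ‖z j‖ < 1}

/-- The class `𝓑_n(M)` of normalized holomorphic functions on the unit polydisk. -/
def memB (n : ℕ) (M : ℝ) (f : (Fin n → ℂ) → ℂ) : Prop :=
  (∀ z ∈ polydisk n, DifferentiableAt ℂ f z) ∧ f 0 = 0 ∧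
    (∀ j : Fin n, pder f 0 j = 1) ∧
    ∀ z ∈ polydisk n, ∑ l, ∑ j, ∑ k, ‖z l * pder2 f z j k‖ ≤ M

/-- The class `𝓑_{H_n^0}(M)` of normalized pluriharmonic mappings `f = h + conj ∘ g`. -/
def memBH (n : ℕ) (M : ℝ) (h g : (Fin n → ℂ) → ℂ) : Prop :=
  (∀ z ∈ polydisk n, DifferentiableAt ℂ h z) ∧ (∀ z ∈ polydisk n, DifferentiableAt ℂ g z) ∧
    h 0 = 0 ∧ g 0 = 0 ∧ (∀ j : Fin n, pder h 0 j = 1) ∧ (∀ j : Fin n, pder g 0 j = 0) ∧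
    ∀ z ∈ polydisk n, ∑ l, ∑ j, ∑ k,
      (‖z l * pder2 h z j k‖ + ‖z l * pder2 g z j k‖) ≤ M

/-!
On the polydisk the Taylor series of `h` and `g` can be differentiated twice term by term, and
`|∂_j ∂_k z^α| ≤ α_k (α - e_k)_j` there. Summing these weights over `j, k` gives exactly
`∑_k α_k (|α| - 1) = |α| (|α| - 1)`, so `∑_{j,k} |∂_j ∂_k h(z)| ≤ ∑_α |α| (|α| - 1) |a_α|`, and
likewise for `g`. Since `|z_l| < 1`, the `n` values of `l` contribute the factor `n`.
-/

open Metric Filter Topology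

section MultiIndex
variable {ι : Type*} [Fintype ι] [DecidableEq ι]

lemma sum_sub_single_add_one {α : ι → ℕ} {k : ι} (hk : α k ≠ 0) :
    ∑ j, (α - Pi.single k 1 : ι → ℕ) j + 1 = ∑ j, α j := by
  have hle : Pi.single k 1 ≤ α := fun j => by
    rcases eq_or_ne j k with rfl | hj
    · simpa [Nat.one_le_iff_ne_zero] using hk
    · simp [hj]
  conv_rhs => rw [← tsub_add_cancel_of_le hle]
  simp [sum_add_distrib]

lemma mul_sum_sub_single (α : ι → ℕ) (k : ι) :
    α k * ∑ j, (α - Pi.single k 1 : ι → ℕ) j = α k * (∑ j, α j - 1) := by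
  rcases eq_or_ne (α k) 0 with hk | hk
  · simp [hk]
  · rw [← sum_sub_single_add_one hk, Nat.add_sub_cancel]

lemma sum_sum_mul_sub_single (α : ι → ℕ) :
    ∑ j, ∑ k, α k * (α - Pi.single k 1 : ι → ℕ) j = (∑ j, α j) * (∑ j, α j - 1) := by
  rw [sum_comm]
  simp_rw [← mul_sum, mul_sum_sub_single, ← sum_mul]

lemma mul_sub_single_le (α : ι → ℕ) (j k : ι) :
    α k * (α - Pi.single k 1 : ι → ℕ) j ≤ (∑ i, α i) * (∑ i, α i - 1) :=
  calc α k * (α - Pi.single k 1 : ι → ℕ) j ≤ α k * ∑ i, (α - Pi.single k 1 : ι → ℕ) i :=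
        Nat.mul_le_mul_left _ (single_le_sum (fun _ _ => Nat.zero_le _) (mem_univ j))
    _ = α k * (∑ i, α i - 1) := mul_sum_sub_single α k
    _ ≤ (∑ i, α i) * (∑ i, α i - 1) :=
        Nat.mul_le_mul_right _ (single_le_sum (fun _ _ => Nat.zero_le _) (mem_univ k))

end MultiIndex

section MultiPow
variable {ι 𝕜 : Type*} [Fintype ι] [RCLike 𝕜]

noncomputable def multiPow (α : ι → ℕ) (z : ι → 𝕜) : 𝕜 := ∏ j, z j ^ α j

lemma norm_multiPow_le_one (α : ι → ℕ) {z : ι → 𝕜} (hz : ‖z‖ ≤ 1) : ‖multiPow α z‖ ≤ 1 := by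
  rw [multiPow, norm_prod]
  exact prod_le_one (fun _ _ => norm_nonneg _) fun j _ => by
    rw [norm_pow]
    exact pow_le_one₀ (norm_nonneg _) ((norm_le_pi_norm z j).trans hz)

lemma multiPow_zero_right {α : ι → ℕ} (hα : α ≠ 0) : multiPow α (0 : ι → 𝕜) = 0 := by
  obtain ⟨j, hj⟩ := Function.ne_iff.1 hα
  exact prod_eq_zero (mem_univ j) (zero_pow hj)

variable [DecidableEq ι]

lemma multiPow_sub_single (α : ι → ℕ) (z : ι → 𝕜) (k : ι) :
    multiPow (α - Pi.single k 1) z = z k ^ (α k - 1) * ∏ j ∈ univ.erase k, z j ^ α j := by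
  rw [multiPow, ← mul_prod_erase univ _ (mem_univ k)]
  congr 1
  · simp
  · exact prod_congr rfl fun j hj => by simp [ne_of_mem_erase hj]

-- `α - Pi.single k 1` is truncated subtraction: it equals `α` when `α k = 0`, but then the
-- term carries the factor `α k = 0`.
noncomputable def multiPowDeriv (α : ι → ℕ) (z : ι → 𝕜) : (ι → 𝕜) →L[𝕜] 𝕜 :=
  ∑ k, ((α k : 𝕜) * multiPow (α - Pi.single k 1) z) • ContinuousLinearMap.proj k

lemma hasFDerivAt_multiPow (α : ι → ℕ) (z : ι → 𝕜) :
    HasFDerivAt (multiPow α) (multiPowDeriv α z) z := by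
  have hpow : ∀ k ∈ univ, HasFDerivAt (fun y : ι → 𝕜 => y k ^ α k)
      ((α k • z k ^ (α k - 1)) • (ContinuousLinearMap.proj k : (ι → 𝕜) →L[𝕜] 𝕜)) z :=
    fun k _ => (hasFDerivAt_apply k z).pow (α k)
  refine (HasFDerivAt.finsetProd hpow).congr_fderiv (sum_congr rfl fun k _ => ?_)
  rw [smul_smul, multiPow_sub_single, nsmul_eq_mul]
  ring_nf

lemma multiPowDeriv_apply_single (α : ι → ℕ) (z : ι → 𝕜) (k : ι) :
    multiPowDeriv α z (Pi.single k 1) = α k * multiPow (α - Pi.single k 1) z := by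
  simp [multiPowDeriv, Pi.single_apply]

lemma norm_multiPowDeriv_le (α : ι → ℕ) {z : ι → 𝕜} (hz : ‖z‖ ≤ 1) :
    ‖multiPowDeriv α z‖ ≤ ((∑ j, α j : ℕ) : ℝ) := by
  refine ContinuousLinearMap.opNorm_le_bound _ (by positivity) fun v => ?_
  calc ‖multiPowDeriv α z v‖ = ‖∑ k, (α k : 𝕜) * multiPow (α - Pi.single k 1) z * v k‖ := by
        simp [multiPowDeriv]
    _ ≤ ∑ k, (α k : ℝ) * 1 * ‖v‖ := by
        refine norm_sum_le_of_le _ fun k _ => ?_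
        rw [norm_mul, norm_mul, RCLike.norm_natCast]
        gcongr
        exacts [norm_multiPow_le_one _ hz, norm_le_pi_norm v k]
    _ = ((∑ j, α j : ℕ) : ℝ) * ‖v‖ := by simp [sum_mul]

end MultiPow

section MultiPowSeries
variable {ι 𝕜 I : Type*} [Fintype ι] [DecidableEq ι] [RCLike 𝕜]

lemma norm_smul_multiPowDeriv_le (a : 𝕜) (α : ι → ℕ) {z : ι → 𝕜} (hz : ‖z‖ ≤ 1) :
    ‖a • multiPowDeriv α z‖ ≤ ‖a‖ * ((∑ j, α j : ℕ) : ℝ) := by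
  rw [norm_smul]
  exact mul_le_mul_of_nonneg_left (norm_multiPowDeriv_le α hz) (norm_nonneg _)

variable (c : I → 𝕜) (e : I → ι → ℕ)

-- The exponents `e i` are indexed by an arbitrary `I` so that this applies to the differentiated
-- series `∑ c_α α_k z^(α - e_k)` too; `hc0` makes the series vanish at `0`, which supplies the
-- point of convergence that termwise differentiation needs.
theorem hasFDerivAt_tsum_multiPow (hc : Summable fun i => ‖c i‖ * ((∑ j, e i j : ℕ) : ℝ))
    (hc0 : ∀ i, e i = 0 → c i = 0) {z : ι → 𝕜} (hz : z ∈ ball (0 : ι → 𝕜) 1) :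
    HasFDerivAt (fun y => ∑' i, c i * multiPow (e i) y) (∑' i, c i • multiPowDeriv (e i) z) z := by
  refine hasFDerivAt_tsum_of_isPreconnected hc isOpen_ball (convex_ball 0 1).isPreconnected
    (fun i y _ => (hasFDerivAt_multiPow (e i) y).const_mul (c i))
    (fun i y hy => norm_smul_multiPowDeriv_le _ _ (mem_ball_zero_iff.1 hy).le)
    (mem_ball_self one_pos) ?_ hz
  convert summable_zero with i
  by_cases hi : e i = 0
  · simp [hc0 i hi]
  · simp [multiPow_zero_right hi]

theorem fderiv_tsum_multiPow_apply_single
    (hc : Summable fun i => ‖c i‖ * ((∑ j, e i j : ℕ) : ℝ))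
    (hc0 : ∀ i, e i = 0 → c i = 0) {z : ι → 𝕜} (hz : z ∈ ball (0 : ι → 𝕜) 1) (k : ι) :
    fderiv 𝕜 (fun y => ∑' i, c i * multiPow (e i) y) z (Pi.single k 1) =
      ∑' i, c i * e i k * multiPow (e i - Pi.single k 1) z := by
  have hsum : Summable fun i => c i • multiPowDeriv (e i) z :=
    hc.of_norm_bounded fun i => norm_smul_multiPowDeriv_le _ _ (mem_ball_zero_iff.1 hz).le
  rw [(hasFDerivAt_tsum_multiPow c e hc hc0 hz).fderiv]
  refine ((ContinuousLinearMap.apply 𝕜 𝕜 (Pi.single k 1)).map_tsum hsum).trans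
    (tsum_congr fun i => ?_)
  simp [multiPowDeriv_apply_single, mul_assoc]

end MultiPowSeries

section SecondDerivative
variable {ι 𝕜 : Type*} [Fintype ι] [RCLike 𝕜] {c : (ι → ℕ) → 𝕜}

lemma summable_norm_mul_sum
    (hc : Summable fun α => ‖c α‖ * (((∑ j, α j) * (∑ j, α j - 1) : ℕ) : ℝ))
    (hc2 : ∀ α, ∑ j, α j < 2 → c α = 0) :
    Summable fun α => ‖c α‖ * ((∑ j, α j : ℕ) : ℝ) := by
  refine hc.of_nonneg_of_le (fun _ => by positivity) fun α => ?_
  rcases lt_or_ge (∑ j, α j) 2 with hα | hα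
  · simp [hc2 α hα]
  · gcongr
    exact Nat.le_mul_of_pos_right _ (by omega)

variable [DecidableEq ι]

theorem fderiv_fderiv_tsum_multiPow_apply_single
    (hc : Summable fun α => ‖c α‖ * (((∑ j, α j) * (∑ j, α j - 1) : ℕ) : ℝ))
    (hc2 : ∀ α, ∑ j, α j < 2 → c α = 0) {z : ι → 𝕜} (hz : z ∈ ball (0 : ι → 𝕜) 1) (j k : ι) :
    fderiv 𝕜 (fun y => fderiv 𝕜 (fun y => ∑' α, c α * multiPow α y) y (Pi.single k 1)) z
        (Pi.single j 1) =
      ∑' α, c α * α k * (α - Pi.single k 1 : ι → ℕ) j *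
        multiPow (α - Pi.single k 1 - Pi.single j 1) z := by
  have hc' : Summable fun α => ‖c α * α k‖ * ((∑ i, (α - Pi.single k 1 : ι → ℕ) i : ℕ) : ℝ) := by
    refine hc.of_nonneg_of_le (fun _ => by positivity) fun α => ?_
    rw [norm_mul, RCLike.norm_natCast, mul_assoc, ← Nat.cast_mul, mul_sum_sub_single]
    gcongr
    exact single_le_sum (fun _ _ => Nat.zero_le _) (mem_univ k)
  have hc0' : ∀ α : ι → ℕ, α - Pi.single k 1 = 0 → c α * α k = 0 := fun α hα => by
    rcases eq_or_ne (α k) 0 with hk | hk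
    · simp [hk]
    · have := sum_sub_single_add_one hk
      simp only [hα, Pi.zero_apply, sum_const_zero, zero_add] at this
      rw [hc2 α (by omega), zero_mul]
  have hfirst : Set.EqOn
      (fun y => fderiv 𝕜 (fun y => ∑' α, c α * multiPow α y) y (Pi.single k 1))
      (fun y => ∑' α, c α * α k * multiPow (α - Pi.single k 1) y) (ball 0 1) :=
    fun y hy => fderiv_tsum_multiPow_apply_single c (fun α => α)
      (summable_norm_mul_sum hc hc2)
      (fun α hα => hc2 α (by simp [hα])) hy k
  rw [(hfirst.eventuallyEq_of_mem (isOpen_ball.mem_nhds hz)).fderiv_eq]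
  exact fderiv_tsum_multiPow_apply_single (fun α => c α * α k) (fun α => α - Pi.single k 1)
    hc' hc0' hz j

lemma summable_norm_mul_mul_sub_single
    (hc : Summable fun α => ‖c α‖ * (((∑ j, α j) * (∑ j, α j - 1) : ℕ) : ℝ)) (j k : ι) :
    Summable fun α => ‖c α‖ * ((α k * (α - Pi.single k 1 : ι → ℕ) j : ℕ) : ℝ) :=
  hc.of_nonneg_of_le (fun _ => by positivity) fun α =>
    mul_le_mul_of_nonneg_left (Nat.cast_le.2 (mul_sub_single_le α j k)) (norm_nonneg _)

theorem norm_fderiv_fderiv_tsum_multiPow_le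
    (hc : Summable fun α => ‖c α‖ * (((∑ j, α j) * (∑ j, α j - 1) : ℕ) : ℝ))
    (hc2 : ∀ α, ∑ j, α j < 2 → c α = 0) {z : ι → 𝕜} (hz : z ∈ ball (0 : ι → 𝕜) 1) (j k : ι) :
    ‖fderiv 𝕜 (fun y => fderiv 𝕜 (fun y => ∑' α, c α * multiPow α y) y (Pi.single k 1)) z
        (Pi.single j 1)‖ ≤
      ∑' α, ‖c α‖ * ((α k * (α - Pi.single k 1 : ι → ℕ) j : ℕ) : ℝ) := by
  rw [fderiv_fderiv_tsum_multiPow_apply_single hc hc2 hz]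
  refine tsum_of_norm_bounded (summable_norm_mul_mul_sub_single hc j k).hasSum fun α => ?_
  rw [norm_mul, norm_mul, norm_mul, RCLike.norm_natCast, RCLike.norm_natCast, Nat.cast_mul,
    ← mul_assoc]
  exact mul_le_of_le_one_right (by positivity)
    (norm_multiPow_le_one _ (mem_ball_zero_iff.1 hz).le)

theorem sum_sum_norm_fderiv_fderiv_tsum_multiPow_le
    (hc : Summable fun α => ‖c α‖ * (((∑ j, α j) * (∑ j, α j - 1) : ℕ) : ℝ))
    (hc2 : ∀ α, ∑ j, α j < 2 → c α = 0) {z : ι → 𝕜} (hz : z ∈ ball (0 : ι → 𝕜) 1) :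
    ∑ j, ∑ k,
      ‖fderiv 𝕜 (fun y => fderiv 𝕜 (fun y => ∑' α, c α * multiPow α y) y (Pi.single k 1)) z
        (Pi.single j 1)‖ ≤
      ∑' α, ‖c α‖ * (((∑ j, α j) * (∑ j, α j - 1) : ℕ) : ℝ) :=
  calc _ ≤ ∑ j, ∑ k, ∑' α, ‖c α‖ * ((α k * (α - Pi.single k 1 : ι → ℕ) j : ℕ) : ℝ) := by
        gcongr with j _ k _
        exact norm_fderiv_fderiv_tsum_multiPow_le hc hc2 hz j k
    _ = ∑' α, ∑ j, ∑ k, ‖c α‖ * ((α k * (α - Pi.single k 1 : ι → ℕ) j : ℕ) : ℝ) :=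
        (hasSum_sum fun j _ => hasSum_sum fun k _ =>
          (summable_norm_mul_mul_sub_single hc j k).hasSum).tsum_eq.symm
    _ = _ := tsum_congr fun α => by
        simp_rw [← mul_sum, ← Nat.cast_sum, sum_sum_mul_sub_single]

end SecondDerivative

section Polydisk
variable {n : ℕ}

lemma polydisk_eq_ball (n : ℕ) : polydisk n = ball (0 : Fin n → ℂ) 1 := by
  ext z
  simp [polydisk, pi_norm_lt_iff zero_lt_one]

lemma pder2_congr {f F : (Fin n → ℂ) → ℂ} {z : Fin n → ℂ} (h : f =ᶠ[𝓝 z] F) (j k : Fin n) :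
    pder2 f z j k = pder2 F z j k := by
  have hpder : (fun y => pder f y k) =ᶠ[𝓝 z] fun y => pder F y k :=
    h.eventuallyEq_nhds.mono fun y hy => by simp only [pder, hy.fderiv_eq]
  rw [pder2, pder2, hpder.fderiv_eq]

lemma pder2_clm_add {F : (Fin n → ℂ) → ℂ} (L : (Fin n → ℂ) →L[ℂ] ℂ) {z : Fin n → ℂ}
    (hF : ∀ᶠ y in 𝓝 z, DifferentiableAt ℂ F y) (j k : Fin n) :
    pder2 (fun y => L y + F y) z j k = pder2 F z j k := by
  have hpder : (fun y => pder (fun y => L y + F y) y k) =ᶠ[𝓝 z]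
      fun y => L (Pi.single k 1) + pder F y k :=
    hF.mono fun y hy => by
      simp only [pder, (L.hasFDerivAt.fun_add hy.hasFDerivAt).fderiv, add_apply]
  rw [pder2, pder2, hpder.fderiv_eq, fderiv_const_add]

theorem sum_sum_norm_pder2_le {F : (Fin n → ℂ) → ℂ} {c : (Fin n → ℕ) → ℂ}
    (L : (Fin n → ℂ) →L[ℂ] ℂ)
    (hc : Summable fun α => ‖c α‖ * (((∑ j, α j) * (∑ j, α j - 1) : ℕ) : ℝ))
    (hc2 : ∀ α, ∑ j, α j < 2 → c α = 0)
    (hF : ∀ y ∈ polydisk n, HasSum (fun α => c α * ∏ j, y j ^ α j) (F y - L y))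
    {z : Fin n → ℂ} (hz : z ∈ polydisk n) :
    ∑ j, ∑ k, ‖pder2 F z j k‖ ≤ ∑' α, ‖c α‖ * (((∑ j, α j) * (∑ j, α j - 1) : ℕ) : ℝ) := by
  rw [polydisk_eq_ball] at hF hz
  have hU : ball (0 : Fin n → ℂ) 1 ∈ 𝓝 z := isOpen_ball.mem_nhds hz
  have hloc : F =ᶠ[𝓝 z] fun y => L y + ∑' α, c α * multiPow α y :=
    eventually_of_mem hU fun y hy => by simp only [multiPow, (hF y hy).tsum_eq, add_sub_cancel]
  have hdiff : ∀ᶠ y in 𝓝 z, DifferentiableAt ℂ (fun y => ∑' α, c α * multiPow α y) y :=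
    eventually_of_mem hU fun y hy => (hasFDerivAt_tsum_multiPow c (fun α => α)
      (summable_norm_mul_sum hc hc2) (fun α hα => hc2 α (by simp [hα])) hy).differentiableAt
  simp_rw [pder2_congr hloc, pder2_clm_add L hdiff]
  exact sum_sum_norm_fderiv_fderiv_tsum_multiPow_le hc hc2 hz

end Polydisk

lemma summable_mul_of_summable_mul_add {I : Type*} {N : ℝ} {m x y : I → ℝ} (hN : 1 ≤ N)
    (hm : ∀ i, 0 ≤ m i) (hx : ∀ i, 0 ≤ x i) (hy : ∀ i, 0 ≤ y i)
    (hS : Summable fun i => N * m i * (x i + y i)) : Summable fun i => x i * m i :=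
  hS.of_nonneg_of_le (fun i => mul_nonneg (hx i) (hm i)) fun i => by
    nlinarith [mul_nonneg (mul_nonneg (sub_nonneg.2 hN) (hm i)) (hx i),
      mul_nonneg (mul_nonneg (zero_le_one.trans hN) (hm i)) (hy i)]

/-- Theorem 2.6: sufficient coefficient condition for membership in
`𝓑_{H_n^0}(M)`. -/
theorem stmt_14 {n : ℕ} (M : ℝ) (hM : 0 < M) (h g : (Fin n → ℂ) → ℂ)
    (a b : (Fin n → ℕ) → ℂ)
    (hh : ∀ z ∈ polydisk n, DifferentiableAt ℂ h z)
    (hg : ∀ z ∈ polydisk n, DifferentiableAt ℂ g z)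
    (hh0 : h 0 = 0) (hg0 : g 0 = 0)
    (hh1 : ∀ j : Fin n, pder h 0 j = 1) (hg1 : ∀ j : Fin n, pder g 0 j = 0)
    (ha0 : ∀ α : Fin n → ℕ, ∑ j, α j < 2 → a α = 0)
    (hb0 : ∀ α : Fin n → ℕ, ∑ j, α j < 2 → b α = 0)
    (hexph : ∀ z ∈ polydisk n,
      HasSum (fun α : Fin n → ℕ => a α * ∏ j, z j ^ α j) (h z - ∑ j, z j))
    (hexpg : ∀ z ∈ polydisk n,
      HasSum (fun α : Fin n → ℕ => b α * ∏ j, z j ^ α j) (g z))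
    (S : ℝ)
    (hS : HasSum (fun α : Fin n → ℕ =>
      (n : ℝ) * (((∑ j, α j) * ((∑ j, α j) - 1) : ℕ) : ℝ) *
        (‖a α‖ + ‖b α‖)) S)
    (hSM : S ≤ M) :
    memBH n M h g := by
  refine ⟨hh, hg, hh0, hg0, hh1, hg1, fun z hz => ?_⟩
  rcases Nat.eq_zero_or_pos n with rfl | hn
  · simpa using hM.le
  have hn1 : (1 : ℝ) ≤ n := by exact_mod_cast hn
  have hA := summable_mul_of_summable_mul_add hn1 (fun _ => Nat.cast_nonneg _)
    (fun α => norm_nonneg (a α)) (fun α => norm_nonneg (b α)) hS.summable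
  have hB := summable_mul_of_summable_mul_add hn1 (fun _ => Nat.cast_nonneg _)
    (fun α => norm_nonneg (b α)) (fun α => norm_nonneg (a α))
    (by simpa only [add_comm ‖b _‖] using hS.summable)
  have hSab := hS.unique
    (((hA.hasSum.add hB.hasSum).mul_left (n : ℝ)).congr_fun fun α => by ring)
  have hzl : ∀ l (w : ℂ), ‖z l * w‖ ≤ ‖w‖ := fun l w => by
    rw [norm_mul]
    exact mul_le_of_le_one_left (norm_nonneg _) (hz l).le
  calc ∑ l, ∑ j, ∑ k, (‖z l * pder2 h z j k‖ + ‖z l * pder2 g z j k‖)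
      ≤ ∑ _l : Fin n, (∑ j, ∑ k, ‖pder2 h z j k‖ + ∑ j, ∑ k, ‖pder2 g z j k‖) := by
        simp only [← sum_add_distrib]
        gcongr <;> apply hzl
    _ ≤ ∑ _l : Fin n, (∑' α, ‖a α‖ * (((∑ j, α j) * (∑ j, α j - 1) : ℕ) : ℝ) +
          ∑' α, ‖b α‖ * (((∑ j, α j) * (∑ j, α j - 1) : ℕ) : ℝ)) := by
        gcongr
        · exact sum_sum_norm_pder2_le (∑ j, ContinuousLinearMap.proj j) hA ha0
            (fun y hy => by simpa using hexph y hy) hz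
        · exact sum_sum_norm_pder2_le 0 hB hb0 (fun y hy => by simpa using hexpg y hy) hz
    _ = S := by rw [hSab, sum_const, card_univ, Fintype.card_fin, nsmul_eq_mul]
    _ ≤ M := hSM
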